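/- arXiv:2208.10866 — 5 statements merged into one kernel-verified Lean document; each statement's English description precedes it below -/
import Mathlib

section
/- Necessity of enhanced message chains for information transfer: Let f ≥ 0, let Q be a deterministic protocol, let r ∈ R(Q,γ^f), and let m ∈ ℕ. If K_d(v_s = 1) holds at (r,m), then there is an enhanced message chain from ⟨s,0⟩ to ⟨d,m⟩ in r. -/
namespace NullMessages

/-- Global parameters of the synchronous crash-failure model `γ^f`:
`N > 2` processes (`Fin N`), a source `s`, a destination `d`, a directed
communication network `chan`, a bound `f` on the number of crashes per run,
and fixed initial values `vOther` for the processes other than `s`. -/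
structure Params where
  N : ℕ
  N_gt : 2 < N
  s : Fin N
  d : Fin N
  sd_ne : s ≠ d
  chan : Fin N → Fin N → Bool
  f : ℕ
  vOther : Fin N → Bool

/-- A failure pattern: `fp q = some (t, Bl)` says that `q` crashes at time `t`,
and in its crash round its message to `p` is sent iff `p ∉ Bl`.
At most `f` processes fail. -/
structure FPat (P : Params) where
  fp : Fin P.N → Option (ℕ × Finset (Fin P.N))
  card_le : (Finset.univ.filter fun q => (fp q).isSome).card ≤ P.f

/-- The set of processes that fail in a failure pattern. -/
def FPat.F {P : Params} (FP : FPat P) : Finset (Fin P.N) :=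
  Finset.univ.filter fun q => (FP.fp q).isSome

/-- A run of a (deterministic) protocol is uniquely determined by the
initial value `v_s` of the source and a failure pattern. -/
abbrev Run (P : Params) := Bool × FPat P

/-- Process-time nodes `⟨p,t⟩`. -/
abbrev Node (P : Params) := Fin P.N × ℕ

/-- An event observed by a process in one round: the messages it sent and
the messages it received (indexed by the other endpoint of the channel). -/
structure Event (P : Params) (Msg : Type) where
  sent : Fin P.N → Option Msg
  rcvd : Fin P.N → Option Msg

/-- A local state: the process's initial value together with the sequence of
events it has observed so far (the current time is the length of that list). -/
abbrev LState (P : Params) (Msg : Type) := Bool × List (Event P Msg)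

/-- A deterministic protocol: as a function of the local state, which message
(if any) to send to each process, and which actions (named by `ℕ`) to perform. -/
structure Protocol (P : Params) (Msg : Type) where
  send : LState P Msg → Fin P.N → Option Msg
  act : LState P Msg → Set ℕ

/-- The initial value of process `p` when the source's value is `b`. -/
def initVal (P : Params) (b : Bool) (p : Fin P.N) : Bool :=
  if p = P.s then b else P.vOther p

/-- The message actually sent from `i` to `j` at time `t` (i.e. in round `t+1`)
in run `r`, given the local states `σ` at time `t`: the prescribed message,
except that a process sends nothing after its crash time, and at its crash time
its message to `j` is suppressed iff `j` is in its blocked set. -/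
def sendRound (P : Params) {Msg : Type} (Q : Protocol P Msg) (r : Run P)
    (σ : Fin P.N → LState P Msg) (t : ℕ) (i j : Fin P.N) : Option Msg :=
  if P.chan i j then
    match r.2.fp i with
    | none => Q.send (σ i) j
    | some x =>
        if t < x.1 then Q.send (σ i) j
        else if t = x.1 then (if j ∈ x.2 then none else Q.send (σ i) j)
        else none
  else none

/-- One synchronous step of process `p`'s local state. -/
def stepState (P : Params) {Msg : Type} (Q : Protocol P Msg) (r : Run P)
    (σ : Fin P.N → LState P Msg) (t : ℕ) (p : Fin P.N) : LState P Msg :=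
  ((σ p).1,
    (σ p).2 ++ [⟨fun j => sendRound P Q r σ t p j, fun j => sendRound P Q r σ t j p⟩])

/-- The local state `r_p(t)` of each process `p` at each time `t` in run `r`
of protocol `Q`.  A crashed process is inactive (its state is frozen) from the
round after its crash on. -/
def stateAt (P : Params) {Msg : Type} (Q : Protocol P Msg) (r : Run P) :
    ℕ → Fin P.N → LState P Msg
  | 0 => fun p => (initVal P r.1 p, [])
  | t + 1 => fun p =>
      let σ := stateAt P Q r t
      match r.2.fp p with
      | some x => if x.1 ≤ t then σ p else stepState P Q r σ t p
      | none => stepState P Q r σ t p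

/-- The message (if any) actually sent from `i` to `j` at time `t` in run `r`. -/
def msgSent (P : Params) {Msg : Type} (Q : Protocol P Msg) (r : Run P)
    (i j : Fin P.N) (t : ℕ) : Option Msg :=
  sendRound P Q r (stateAt P Q r t) t i j

/-- `i` sends an actual message to `j` at `(r,t)`. -/
def SendsActual (P : Params) {Msg : Type} (Q : Protocol P Msg) (r : Run P)
    (i j : Fin P.N) (t : ℕ) : Prop :=
  (msgSent P Q r i j t).isSome

/-- The channel from `i` to `j` is blocked at `(r,t)`: `i` fails at some time
`t' < t`, or at time `t' = t` with `j` in its blocked set. -/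
def BlockedAt (P : Params) (r : Run P) (i j : Fin P.N) (t : ℕ) : Prop :=
  ∃ x ∈ r.2.fp i, x.1 < t ∨ (x.1 = t ∧ j ∈ x.2)

/-- `i` sends `j` a *null message* at `(r,t)`: the channel is not blocked,
`i` sends no actual message to `j` at `(r,t)`, and in some run `r'` of the
same protocol `i` does send `j` an actual message at time `t`. -/
def SendsNull (P : Params) {Msg : Type} (Q : Protocol P Msg) (r : Run P)
    (i j : Fin P.N) (t : ℕ) : Prop :=
  ¬ BlockedAt P r i j t ∧ ¬ SendsActual P Q r i j t ∧
    ∃ r' : Run P, SendsActual P Q r' i j t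

/-- `i` sends `j` an actual message or a null message at `(r,t)`. -/
def SendsE (P : Params) {Msg : Type} (Q : Protocol P Msg) (r : Run P)
    (i j : Fin P.N) (t : ℕ) : Prop :=
  SendsActual P Q r i j t ∨ SendsNull P Q r i j t

/-- An *enhanced message chain* `θ ⇝ θ'` in run `r`: processes
`p = i₁, …, i_k = q` and times `t ≤ t₁ < ⋯ < t_k = t'` such that each `i_h`
sends an actual or null message to `i_{h+1}` at `(r,t_h)`. -/
inductive Chain (P : Params) {Msg : Type} (Q : Protocol P Msg) (r : Run P) :
    Node P → Node P → Prop
  | wait {p : Fin P.N} {t t' : ℕ} (h : t ≤ t') : Chain P Q r (p, t) (p, t')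
  | step {p j q : Fin P.N} {t u t' : ℕ} (h1 : t ≤ u) (h2 : SendsE P Q r p j u)
      (h3 : Chain P Q r (j, u + 1) (q, t')) : Chain P Q r (p, t) (q, t')

/-- Knowledge: `K_i φ` holds at `(r,m)` iff `φ` holds at `(r',m)` for every run
`r'` of the protocol that is indistinguishable from `r` to `i` at time `m`. -/
def Kn (P : Params) {Msg : Type} (Q : Protocol P Msg) (i : Fin P.N)
    (φ : Run P → ℕ → Prop) (r : Run P) (m : ℕ) : Prop :=
  ∀ r' : Run P, stateAt P Q r' m i = stateAt P Q r m i → φ r' m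

/-- Process `i` performs action `α` at time `m` in run `r`: the protocol
prescribes `α` in `i`'s current local state and `i` has not yet reached its
crash round (a crashing process performs no actions in its crash round). -/
def Performs (P : Params) {Msg : Type} (Q : Protocol P Msg) (r : Run P)
    (i : Fin P.N) (α : ℕ) (m : ℕ) : Prop :=
  (∀ x ∈ r.2.fp i, m < x.1) ∧ α ∈ Q.act (stateAt P Q r m i)

/-- Local edges of the communication graph. -/
def El (P : Params) (u v : Node P) : Prop := v.1 = u.1 ∧ v.2 = u.2 + 1

/-- Actual-message edges of the communication graph `CG_Q(r)`. -/
def Ea (P : Params) {Msg : Type} (Q : Protocol P Msg) (r : Run P)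
    (u v : Node P) : Prop :=
  SendsActual P Q r u.1 v.1 u.2 ∧ v.2 = u.2 + 1

/-- Null-message edges of the communication graph `CG_Q(r)`. -/
def En (P : Params) {Msg : Type} (Q : Protocol P Msg) (r : Run P)
    (u v : Node P) : Prop :=
  SendsNull P Q r u.1 v.1 u.2 ∧ v.2 = u.2 + 1

/-- Edges of the communication graph `CG_Q(r)`. -/
def Edge (P : Params) {Msg : Type} (Q : Protocol P Msg) (r : Run P)
    (u v : Node P) : Prop :=
  El P u v ∨ Ea P Q r u v ∨ En P Q r u v

/-- `π` is a path from `θ` to `θ'` in the communication graph `CG_Q(r)`. -/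
def IsPath (P : Params) {Msg : Type} (Q : Protocol P Msg) (r : Run P)
    (π : List (Node P)) (θ θ' : Node P) : Prop :=
  π.head? = some θ ∧ π.getLast? = some θ' ∧ π.Chain' (Edge P Q r)

/-- `π` is a *B null free* path: each of its edges is a local edge, an
actual-message edge, or a null-message edge whose sender is not in `B`. -/
def BNullFree (P : Params) {Msg : Type} (Q : Protocol P Msg) (r : Run P)
    (B : Set (Fin P.N)) (π : List (Node P)) : Prop :=
  π.Chain' fun u v => El P u v ∨ Ea P Q r u v ∨ (En P Q r u v ∧ u.1 ∉ B)

/-- `π` is an actual message chain (a path using only local and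
actual-message edges) from `θ` to `θ'` in `CG_Q(r)`. -/
def IsActualPath (P : Params) {Msg : Type} (Q : Protocol P Msg) (r : Run P)
    (π : List (Node P)) (θ θ' : Node P) : Prop :=
  π.head? = some θ ∧ π.getLast? = some θ' ∧
    π.Chain' fun u v => El P u v ∨ Ea P Q r u v

/-- There is an actual message chain from `θ` to `θ'` in `r`. -/
def ActualChain (P : Params) {Msg : Type} (Q : Protocol P Msg) (r : Run P)
    (θ θ' : Node P) : Prop :=
  ∃ π : List (Node P), IsActualPath P Q r π θ θ'

/-- An *n-resilient message block* from `θ` to `θ'` in `CG_Q(r)`: a set `Γ` of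
paths from `θ` to `θ'` such that for every set `B` of at most `n` processes,
`Γ` contains a `B` null free path. -/
def ResBlockN (P : Params) {Msg : Type} (Q : Protocol P Msg) (r : Run P)
    (n : ℕ) (θ θ' : Node P) (Γ : Set (List (Node P))) : Prop :=
  (∀ π ∈ Γ, IsPath P Q r π θ θ') ∧
    ∀ B : Finset (Fin P.N), B.card ≤ n → ∃ π ∈ Γ, BNullFree P Q r (↑B) π

/-- An *(f/failed)-resilient message block* from `θ` to `θ'` in `CG_Q(r)`:
a set `Γ` of paths from `θ` to `θ'` such that for every set `B` of processes
with `|B ∪ 𝔽^r| ≤ f`, `Γ` contains a `B` null free path. -/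
def ResBlockFFailed (P : Params) {Msg : Type} (Q : Protocol P Msg) (r : Run P)
    (θ θ' : Node P) (Γ : Set (List (Node P))) : Prop :=
  (∀ π ∈ Γ, IsPath P Q r π θ θ') ∧
    ∀ B : Finset (Fin P.N), (B ∪ r.2.F).card ≤ P.f →
      ∃ π ∈ Γ, BNullFree P Q r (↑B) π

/-- The empty failure pattern. -/
def nicePat (P : Params) : FPat P :=
  ⟨fun _ => none, by simp⟩

/-- The *nice run* `r̂(Q)`: `v_s = 1` and no process fails. -/
def niceRun (P : Params) : Run P := (true, nicePat P)

/-- `i` sends a null message to `j` at time `t` *in case* `φ`: in every run in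
which the channel from `i` to `j` is not blocked at time `t`, `i` sends `j` a
null message at time `t` iff `φ` holds there. -/
def NullInCase (P : Params) {Msg : Type} (Q : Protocol P Msg)
    (i j : Fin P.N) (t : ℕ) (φ : Run P → ℕ → Prop) : Prop :=
  ∀ r : Run P, ¬ BlockedAt P r i j t → (SendsNull P Q r i j t ↔ φ r t)

/-- A *Nice-based Message (NbM)* protocol: all actual messages are single-bit;
a process sends '0' (`false`) iff it knows the run is not nice and '1' (`true`)
otherwise; and every null message is a null message in case the sender does not
know that the run is not nice. -/
def NbM (P : Params) (Q : Protocol P Bool) : Prop :=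
  (∀ (r : Run P) (i j : Fin P.N) (t : ℕ) (b : Bool),
      msgSent P Q r i j t = some b →
        (b = false ↔ Kn P Q i (fun r' _ => r' ≠ niceRun P) r t)) ∧
  (∀ (i j : Fin P.N) (t : ℕ), (∃ r : Run P, SendsNull P Q r i j t) →
      NullInCase P Q i j t fun r' u =>
        ¬ Kn P Q i (fun r'' _ => r'' ≠ niceRun P) r' u)

/-- The fact `v_s ≠ 1 ∨ s is faulty`. -/
def BadFact (P : Params) : Run P → ℕ → Prop :=
  fun r' _ => r'.1 ≠ true ∨ (r'.2.fp P.s).isSome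

/-- A *Robust-based Message (RbM)* protocol: all actual messages are single-bit;
a process sends '0' (`false`) iff it knows `v_s ≠ 1 ∨ s is faulty` and '1'
(`true`) otherwise; every null message is a null message in case the sender
does not know `v_s ≠ 1 ∨ s is faulty`; and every actual message of the nice
run is also sent in any run in which the corresponding channel is unblocked. -/
def RbM (P : Params) (Q : Protocol P Bool) : Prop :=
  (∀ (r : Run P) (i j : Fin P.N) (t : ℕ) (b : Bool),
      msgSent P Q r i j t = some b → (b = false ↔ Kn P Q i (BadFact P) r t)) ∧
  (∀ (i j : Fin P.N) (t : ℕ), (∃ r : Run P, SendsNull P Q r i j t) →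
      NullInCase P Q i j t fun r' u => ¬ Kn P Q i (BadFact P) r' u) ∧
  (∀ (r : Run P) (t : ℕ) (p q : Fin P.N),
      SendsActual P Q (niceRun P) p q t → ¬ BlockedAt P r p q t →
        SendsActual P Q r p q t)

/-- Action `α` of process `i` has (already) been performed by time `t` in `r`. -/
def PerformedBy (P : Params) {Msg : Type} (Q : Protocol P Msg) (r : Run P)
    (i : Fin P.N) (α : ℕ) (t : ℕ) : Prop :=
  ∃ u ≤ t, Performs P Q r i α u

/-- `Q` is consistent with the Ordered Response instance
`⟨v_s = 1, a_1, …, a_k⟩` (action `a h` is assigned to process `ip h`):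
`a h` is performed only if `v_s = 1` and all earlier actions have been
performed. -/
def ConsistentOR (P : Params) {Msg : Type} (Q : Protocol P Msg) {k : ℕ}
    (ip : Fin k → Fin P.N) (a : Fin k → ℕ) : Prop :=
  ∀ (r : Run P) (h : Fin k) (t : ℕ), Performs P Q r (ip h) (a h) t →
    r.1 = true ∧ ∀ g : Fin k, g < h → PerformedBy P Q r (ip g) (a g) t

/-- `Q` solves the Ordered Response instance: it is consistent with it and all
the actions are performed in `Q`'s nice run. -/
def SolvesOR (P : Params) {Msg : Type} (Q : Protocol P Msg) {k : ℕ}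
    (ip : Fin k → Fin P.N) (a : Fin k → ℕ) : Prop :=
  ConsistentOR P Q ip a ∧
    ∀ h : Fin k, ∃ t : ℕ, Performs P Q (niceRun P) (ip h) (a h) t

/-- `Q` solves Robust Information Transfer between `s` and `d`: in every run in
which `v_s = 1` and `s` does not fail, eventually `d` knows that `v_s = 1`. -/
def SolvesRobustIT (P : Params) {Msg : Type} (Q : Protocol P Msg) : Prop :=
  ∀ r : Run P, r.1 = true → r.2.fp P.s = none →
    ∃ m : ℕ, Kn P Q P.d (fun r' _ => r'.1 = true) r m

/-- Process `p` occurs as the sender of an actual or null message on path `π`. -/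
def SendsOn (P : Params) {Msg : Type} (Q : Protocol P Msg) (r : Run P)
    (π : List (Node P)) (p : Fin P.N) : Prop :=
  ∃ e ∈ π.zip π.tail, e.1.1 = p ∧ (Ea P Q r e.1 e.2 ∨ En P Q r e.1 e.2)

/-- The failure pattern `FP` is compatible with the run `r` (of protocol `Q`):
exactly the processes of `FP` fail in `r`, at the times `FP` specifies, and in
the crash round of a failing process `q`, the message prescribed by `Q` from
`q` to `p` is sent iff `p` is not in `q`'s blocked set. -/
def Compatible (P : Params) {Msg : Type} (Q : Protocol P Msg) (r : Run P)
    (FP : FPat P) : Prop :=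
  (∀ q : Fin P.N, (FP.fp q).isSome ↔ (r.2.fp q).isSome) ∧
  (∀ q : Fin P.N, ∀ x ∈ FP.fp q, ∀ y ∈ r.2.fp q, x.1 = y.1) ∧
  (∀ q : Fin P.N, ∀ x ∈ FP.fp q, ∀ p : Fin P.N,
    (P.chan q p = true ∧ (Q.send (stateAt P Q r x.1 q) p).isSome) →
      ((msgSent P Q r q p x.1).isSome ↔ p ∉ x.2))

/-- `FP'` is *harsher* than `FP` (written `FP' ≤ FP`): every process failing in
`FP` fails in `FP'`, either strictly earlier or at the same time with a larger
blocked set. -/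
def Harsher (P : Params) (FP' FP : FPat P) : Prop :=
  (∀ q : Fin P.N, (FP.fp q).isSome → (FP'.fp q).isSome) ∧
  ∀ q : Fin P.N, ∀ x ∈ FP.fp q, ∀ x' ∈ FP'.fp q,
    x'.1 < x.1 ∨ (x'.1 = x.1 ∧ x.2 ⊆ x'.2)

/-- `FP` is the minimal failure pattern w.r.t. `r`: it is compatible with `r`
and every compatible pattern of which it is a harsher variant equals it. -/
def MinimalFP (P : Params) {Msg : Type} (Q : Protocol P Msg) (r : Run P)
    (FP : FPat P) : Prop :=
  Compatible P Q r FP ∧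
    ∀ FP' : FPat P, Compatible P Q r FP' → Harsher P FP FP' → FP' = FP

/-! If no enhanced chain from `⟨s,0⟩` reaches `⟨p,t⟩`, then `p` has the same local state at
time `t` in every run with the same failure pattern as `r`, whatever `v_s` is there. By induction
on `t`: a message reaching `p` can only differ between the two runs if its sender is reachable
from `⟨s,0⟩`; but then the channel carries neither an actual nor a null message in `r`, and by the
definition of null messages no run with the same failure pattern sends anything on it.
So `d` cannot tell `r` from the run with `v_s = 0`, and cannot know `v_s = 1`. -/

variable {P : Params} {Msg : Type} {Q : Protocol P Msg} {r : Run P}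

theorem Chain.extend_wait {a b : Node P} (h : Chain P Q r a b) {t : ℕ} (hle : b.2 ≤ t) :
    Chain P Q r a (b.1, t) := by
  induction h with
  | wait h => exact Chain.wait (h.trans hle)
  | step h1 h2 _ ih => exact Chain.step h1 h2 (ih hle)

theorem Chain.snoc {a b : Node P} (h : Chain P Q r a b) {p : Fin P.N}
    (hs : SendsE P Q r b.1 p b.2) : Chain P Q r a (p, b.2 + 1) := by
  induction h with
  | wait hle => exact Chain.step hle hs (Chain.wait le_rfl)
  | step h1 h2 _ ih => exact Chain.step h1 h2 (ih hs)

theorem sendRound_eq_none_of_blockedAt (σ : Fin P.N → LState P Msg) {t : ℕ} {i j : Fin P.N}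
    (hB : BlockedAt P r i j t) : sendRound P Q r σ t i j = none := by
  obtain ⟨x, hx, hcase⟩ := hB
  unfold sendRound
  rw [Option.mem_def.mp hx]
  split
  · rcases hcase with hlt | ⟨rfl, hj⟩
    · simp [show ¬ t < x.1 by omega, show t ≠ x.1 by omega]
    · simp [hj]
  · rfl

theorem msgSent_eq_none_of_not_sendsE {i j : Fin P.N} {t : ℕ} (hE : ¬ SendsE P Q r i j t)
    (r' : Run P) (hfp : r'.2 = r.2) : msgSent P Q r' i j t = none := by
  by_cases hB : BlockedAt P r i j t
  · exact sendRound_eq_none_of_blockedAt _ (by rwa [BlockedAt, hfp])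
  · have hA : ¬ SendsActual P Q r i j t := fun hA => hE (Or.inl hA)
    have hA' : ¬ SendsActual P Q r' i j t := fun hA' => hE (Or.inr ⟨hB, hA, r', hA'⟩)
    exact Option.not_isSome_iff_eq_none.mp hA'

theorem stateAt_succ_congr {r' : Run P} {t : ℕ} {p : Fin P.N}
    (hσ : stateAt P Q r' t p = stateAt P Q r t p)
    (hrcvd : ∀ j, msgSent P Q r' j p t = msgSent P Q r j p t) (hfp : r'.2 = r.2) :
    stateAt P Q r' (t + 1) p = stateAt P Q r (t + 1) p := by
  have hstep : stepState P Q r' (stateAt P Q r' t) t p = stepState P Q r (stateAt P Q r t) t p := by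
    have hsent : ∀ j, msgSent P Q r' p j t = msgSent P Q r p j t := fun j => by
      simp only [msgSent, sendRound, hfp, hσ]
    simp only [stepState, hσ, Prod.mk.injEq, List.append_cancel_left_eq, List.cons.injEq,
      Event.mk.injEq, and_true, true_and]
    exact ⟨funext hsent, funext hrcvd⟩
  simp only [stateAt, hfp]
  split
  · split_ifs
    exacts [hσ, hstep]
  · exact hstep

theorem stateAt_eq_of_not_chain (b : Bool) {t : ℕ} {p : Fin P.N}
    (hp : ¬ Chain P Q r (P.s, 0) (p, t)) : stateAt P Q (b, r.2) t p = stateAt P Q r t p := by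
  induction t generalizing p with
  | zero =>
    have hps : p ≠ P.s := by
      rintro rfl
      exact hp (Chain.wait le_rfl)
    simp [stateAt, initVal, hps]
  | succ t ih =>
    refine stateAt_succ_congr (ih fun hc => hp (hc.extend_wait t.le_succ)) (fun j => ?_) rfl
    by_cases hcj : Chain P Q r (P.s, 0) (j, t)
    · have hE : ¬ SendsE P Q r j p t := fun hs => hp (hcj.snoc hs)
      rw [msgSent_eq_none_of_not_sendsE hE (b, r.2) rfl, msgSent_eq_none_of_not_sendsE hE r rfl]
    · simp only [msgSent, sendRound, ih hcj]

/-- **Necessity of enhanced message chains.**  If `K_d(v_s = 1)` holds at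
`(r,m)`, then there is an enhanced message chain from `⟨s,0⟩` to `⟨d,m⟩` in `r`. -/
theorem enhanced_chain_necessary (P : Params) {Msg : Type} (Q : Protocol P Msg)
    (r : Run P) (m : ℕ)
    (h : Kn P Q P.d (fun r' _ => r'.1 = true) r m) :
    Chain P Q r (P.s, 0) (P.d, m) := by
  by_contra hc
  exact Bool.false_ne_true (h (false, r.2) (stateAt_eq_of_not_chain false hc))

end NullMessages
end

section
/- Necessity of (f/failed)-resilient message blocks: Let f ≥ 0, let Q be a deterministic protocol, let r ∈ R(Q,γ^f), and let 𝔽^r denote the set of faulty processes in r. If K_d(v_s = 1) holds at (r,m), then there is an (f/failed)-resilient message block from θ_s = ⟨s,0⟩ to θ_d = ⟨d,m⟩ in CG_Q(r); equivalently, for every set B of processes with |B ∪ 𝔽^r| ≤ f there is a B null free path from ⟨s,0⟩ to ⟨d,m⟩ in CG_Q(r). -/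
namespace NullMessages

/-! ### Auxiliary development for the necessity theorem -/

/-- `B` null free reachability from `⟨s,0⟩` in `CG_Q(r)`. -/
inductive Reach (P : Params) {Msg : Type} (Q : Protocol P Msg) (r : Run P)
    (B : Finset (Fin P.N)) : Node P → Prop
  | base : Reach P Q r B (P.s, 0)
  | step {u v : Node P} (hu : Reach P Q r B u)
      (e : El P u v ∨ Ea P Q r u v ∨ (En P Q r u v ∧ u.1 ∉ (↑B : Set (Fin P.N)))) :
      Reach P Q r B v

lemma Reach.mono {P : Params} {Msg : Type} {Q : Protocol P Msg} {r : Run P}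
    {B : Finset (Fin P.N)} {p : Fin P.N} {t t' : ℕ}
    (h : Reach P Q r B (p, t)) (hle : t ≤ t') : Reach P Q r B (p, t') := by
  induction t' with
  | zero => exact (Nat.le_zero.mp hle) ▸ h
  | succ n ih =>
    rcases Nat.lt_or_ge t (n + 1) with h1 | h1
    · exact (ih (Nat.lt_succ_iff.mp h1)).step (Or.inl ⟨rfl, rfl⟩)
    · exact (Nat.le_antisymm hle h1) ▸ h

lemma reach_path {P : Params} {Msg : Type} {Q : Protocol P Msg} {r : Run P}
    {B : Finset (Fin P.N)} {v : Node P} (hv : Reach P Q r B v) :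
    ∃ π : List (Node P), π.head? = some (P.s, 0) ∧ π.getLast? = some v ∧
      BNullFree P Q r (↑B) π := by
  induction hv with
  | base => exact ⟨[(P.s, 0)], rfl, rfl, List.isChain_singleton _⟩
  | @step u w hu e ih =>
    obtain ⟨π, hh, hl, hc⟩ := ih
    refine ⟨π ++ [w], ?_, ?_, ?_⟩
    · cases π with
      | nil => simp at hh
      | cons a l => simpa using hh
    · simp
    · rw [BNullFree, List.Chain', List.isChain_append]
      refine ⟨hc, List.isChain_singleton _, ?_⟩
      intro x hx y hy
      rw [hl] at hx
      simp at hx hy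
      subst hx; subst hy
      exact e

open Classical in
/-- The adversarial failure pattern function: crash each contaminated member of
`B` at its contamination time (blocking everything), provided that is no later
than its crash in `r`. -/
noncomputable def fpAux (P : Params) {Msg : Type} (Q : Protocol P Msg) (r : Run P)
    (B : Finset (Fin P.N)) (p : Fin P.N) : Option (ℕ × Finset (Fin P.N)) :=
  if (p ∈ B ∧ (∃ u, Reach P Q r B (p, u)) ∧
      ∀ x ∈ r.2.fp p, sInf {u | Reach P Q r B (p, u)} ≤ x.1)
  then some (sInf {u | Reach P Q r B (p, u)}, Finset.univ)
  else r.2.fp p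

/-- The adversarial failure pattern, legal when `|B ∪ 𝔽^r| ≤ f`. -/
noncomputable def fpatAux (P : Params) {Msg : Type} (Q : Protocol P Msg) (r : Run P)
    (B : Finset (Fin P.N)) (hB : (B ∪ r.2.F).card ≤ P.f) : FPat P := by
  refine ⟨fpAux P Q r B, le_trans (Finset.card_le_card ?_) hB⟩
  intro q hq
  simp only [Finset.mem_filter, Finset.mem_univ, true_and] at hq
  unfold fpAux at hq
  split at hq
  · rename_i hcond
    exact Finset.mem_union_left _ hcond.1
  · refine Finset.mem_union_right _ ?_
    simp only [FPat.F, Finset.mem_filter, Finset.mem_univ, true_and]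
    exact hq

lemma stateAt_succ (P : Params) {Msg : Type} (Q : Protocol P Msg) (rr : Run P)
    (t : ℕ) (p : Fin P.N) :
    stateAt P Q rr (t + 1) p =
      match rr.2.fp p with
      | some x => if x.1 ≤ t then stateAt P Q rr t p
                  else stepState P Q rr (stateAt P Q rr t) t p
      | none => stepState P Q rr (stateAt P Q rr t) t p := rfl

lemma msg_eq (P : Params) {Msg : Type} (Q : Protocol P Msg) (r : Run P)
    (B : Finset (Fin P.N)) (hB : (B ∪ r.2.F).card ≤ P.f) (t : ℕ)
    (IH : ∀ q, ¬ Reach P Q r B (q, t) →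
      stateAt P Q (false, fpatAux P Q r B hB) t q = stateAt P Q r t q)
    (j p : Fin P.N)
    (hp : ¬ Reach P Q r B (j, t) ∨ ¬ Reach P Q r B (p, t + 1)) :
    sendRound P Q (false, fpatAux P Q r B hB)
        (stateAt P Q (false, fpatAux P Q r B hB) t) t j p
      = sendRound P Q r (stateAt P Q r t) t j p := by
  set r' : Run P := (false, fpatAux P Q r B hB) with hr'
  by_cases hc : P.chan j p
  swap
  · simp [sendRound, hc]
  by_cases hj : Reach P Q r B (j, t)
  · -- contaminated sender: both sides are `none`
    have hp2 : ¬ Reach P Q r B (p, t + 1) := hp.resolve_left (not_not_intro hj)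
    have hRHS : sendRound P Q r (stateAt P Q r t) t j p = none := by
      by_contra hne
      have hact : SendsActual P Q r j p t := by
        rw [SendsActual, msgSent]
        exact Option.isSome_iff_ne_none.mpr hne
      exact hp2 (hj.step (Or.inr (Or.inl ⟨hact, rfl⟩)))
    rw [hRHS]
    have hτle : sInf {u | Reach P Q r B (j, u)} ≤ t := Nat.sInf_le hj
    by_cases hcond : (j ∈ B ∧ (∃ u, Reach P Q r B (j, u)) ∧
        ∀ x ∈ r.2.fp j, sInf {u | Reach P Q r B (j, u)} ≤ x.1)
    · have hfp' : (fpatAux P Q r B hB).fp j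
          = some (sInf {u | Reach P Q r B (j, u)}, Finset.univ) := by
        show fpAux P Q r B j = _
        rw [fpAux, if_pos hcond]
      simp only [sendRound, hc, if_true, (show r'.2.fp j = _ from hfp')]
      rcases lt_or_eq_of_le hτle with h1 | h1
      · rw [if_neg (by omega), if_neg (by omega)]
      · rw [if_neg (by omega), if_pos h1.symm, if_pos (Finset.mem_univ p)]
    · have hfp' : (fpatAux P Q r B hB).fp j = r.2.fp j := by
        show fpAux P Q r B j = _
        rw [fpAux, if_neg hcond]
      push_neg at hcond
      by_cases hjB : j ∈ B
      · obtain ⟨x, hx, hxlt⟩ := hcond hjB ⟨t, hj⟩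
        have hxt : x.1 < t := lt_of_lt_of_le hxlt hτle
        rw [Option.mem_def] at hx
        simp only [sendRound, hc, if_true, (show r'.2.fp j = _ from hfp'), hx]
        rw [if_neg (by omega), if_neg (by omega)]
      · by_contra hL
        have hact' : SendsActual P Q r' j p t := by
          rw [SendsActual, msgSent]
          exact Option.isSome_iff_ne_none.mpr hL
        have hnb : ¬ BlockedAt P r j p t := by
          rintro ⟨x, hx, hor⟩
          rw [Option.mem_def] at hx
          apply hL
          simp only [sendRound, hc, if_true, (show r'.2.fp j = _ from hfp'), hx]
          rcases hor with h1 | ⟨h1, h2⟩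
          · rw [if_neg (by omega), if_neg (by omega)]
          · rw [if_neg (by omega), if_pos h1.symm, if_pos h2]
        have hnull : SendsNull P Q r j p t :=
          ⟨hnb, by rw [SendsActual, msgSent, hRHS]; simp, r', hact'⟩
        exact hp2 (hj.step (Or.inr (Or.inr ⟨⟨hnull, rfl⟩, by simpa using hjB⟩)))
  · -- uncontaminated sender: same state, same (possibly rescheduled) crash
    have hσ : stateAt P Q r' t j = stateAt P Q r t j := IH j hj
    by_cases hcond : (j ∈ B ∧ (∃ u, Reach P Q r B (j, u)) ∧
        ∀ x ∈ r.2.fp j, sInf {u | Reach P Q r B (j, u)} ≤ x.1)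
    · have hfp' : (fpatAux P Q r B hB).fp j
          = some (sInf {u | Reach P Q r B (j, u)}, Finset.univ) := by
        show fpAux P Q r B j = _
        rw [fpAux, if_pos hcond]
      have hτ : t < sInf {u | Reach P Q r B (j, u)} := by
        by_contra hle
        push_neg at hle
        exact hj ((Nat.sInf_mem hcond.2.1).mono hle)
      simp only [sendRound, hc, if_true, (show r'.2.fp j = _ from hfp'), hσ]
      rw [if_pos hτ]
      rcases hfp : r.2.fp j with _ | x
      · rfl
      · have hx := hcond.2.2 x (by rw [hfp]; rfl)
        have : t < x.1 := lt_of_lt_of_le hτ hx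
        simp [this]
    · have hfp' : (fpatAux P Q r B hB).fp j = r.2.fp j := by
        show fpAux P Q r B j = _
        rw [fpAux, if_neg hcond]
      simp only [sendRound, hc, if_true, (show r'.2.fp j = _ from hfp'), hσ]

lemma states_eq (P : Params) {Msg : Type} (Q : Protocol P Msg) (r : Run P)
    (B : Finset (Fin P.N)) (hB : (B ∪ r.2.F).card ≤ P.f) :
    ∀ (t : ℕ) (p : Fin P.N), ¬ Reach P Q r B (p, t) →
      stateAt P Q (false, fpatAux P Q r B hB) t p = stateAt P Q r t p := by
  intro t
  induction t with
  | zero =>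
    intro p hp
    have hps : p ≠ P.s := by
      rintro rfl
      exact hp Reach.base
    show (initVal P false p, ([] : List (Event P Msg)))
        = (initVal P r.1 p, ([] : List (Event P Msg)))
    rw [initVal, initVal, if_neg hps, if_neg hps]
  | succ t IH =>
    intro p hp
    have hpt : ¬ Reach P Q r B (p, t) := fun h => hp (h.mono (Nat.le_succ t))
    set r' : Run P := (false, fpatAux P Q r B hB) with hr'
    have hev : (⟨fun jj => sendRound P Q r' (stateAt P Q r' t) t p jj,
                 fun jj => sendRound P Q r' (stateAt P Q r' t) t jj p⟩ : Event P Msg)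
             = ⟨fun jj => sendRound P Q r (stateAt P Q r t) t p jj,
                fun jj => sendRound P Q r (stateAt P Q r t) t jj p⟩ := by
      congr 1
      · funext jj
        exact msg_eq P Q r B hB t IH p jj (Or.inl hpt)
      · funext jj
        exact msg_eq P Q r B hB t IH jj p (Or.inr hp)
    have hstep : stepState P Q r' (stateAt P Q r' t) t p
        = stepState P Q r (stateAt P Q r t) t p := by
      rw [stepState, stepState, IH p hpt, hev]
    rw [stateAt_succ, stateAt_succ]
    by_cases hcond : (p ∈ B ∧ (∃ u, Reach P Q r B (p, u)) ∧
        ∀ x ∈ r.2.fp p, sInf {u | Reach P Q r B (p, u)} ≤ x.1)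
    · have hfp' : (fpatAux P Q r B hB).fp p
          = some (sInf {u | Reach P Q r B (p, u)}, Finset.univ) := by
        show fpAux P Q r B p = _
        rw [fpAux, if_pos hcond]
      have hτ : t < sInf {u | Reach P Q r B (p, u)} := by
        by_contra hle
        push_neg at hle
        exact hpt ((Nat.sInf_mem hcond.2.1).mono hle)
      rw [hfp']
      show (if sInf {u | Reach P Q r B (p, u)} ≤ t then stateAt P Q r' t p
          else stepState P Q r' (stateAt P Q r' t) t p) = _
      rw [if_neg (by omega)]
      rcases hfp : r.2.fp p with _ | x
      · exact hstep
      · have hx := hcond.2.2 x (by rw [hfp]; rfl)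
        show _ = (if x.1 ≤ t then stateAt P Q r t p
            else stepState P Q r (stateAt P Q r t) t p)
        rw [if_neg (by omega)]
        exact hstep
    · have hfp' : (fpatAux P Q r B hB).fp p = r.2.fp p := by
        show fpAux P Q r B p = _
        rw [fpAux, if_neg hcond]
      rw [hfp']
      rcases hfp : r.2.fp p with _ | x
      · exact hstep
      · show (if x.1 ≤ t then stateAt P Q r' t p
            else stepState P Q r' (stateAt P Q r' t) t p)
          = (if x.1 ≤ t then stateAt P Q r t p
            else stepState P Q r (stateAt P Q r t) t p)
        by_cases hxt : x.1 ≤ t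
        · rw [if_pos hxt, if_pos hxt]
          exact IH p hpt
        · rw [if_neg hxt, if_neg hxt]
          exact hstep

/-- **Necessity of (f/failed)-resilient message blocks.**  If `K_d(v_s = 1)`
holds at `(r,m)`, then `CG_Q(r)` contains an (f/failed)-resilient message
block from `⟨s,0⟩` to `⟨d,m⟩`; equivalently, for every set `B` of processes
with `|B ∪ 𝔽^r| ≤ f` there is a `B` null free path from `⟨s,0⟩` to `⟨d,m⟩`
in `CG_Q(r)`. -/
theorem resilient_block_necessary (P : Params) {Msg : Type} (Q : Protocol P Msg)
    (r : Run P) (m : ℕ)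
    (h : Kn P Q P.d (fun r' _ => r'.1 = true) r m) :
    (∃ Γ : Set (List (Node P)), ResBlockFFailed P Q r (P.s, 0) (P.d, m) Γ) ∧
    ∀ B : Finset (Fin P.N), (B ∪ r.2.F).card ≤ P.f →
      ∃ π : List (Node P), IsPath P Q r π (P.s, 0) (P.d, m) ∧
        BNullFree P Q r (↑B) π := by
  have main : ∀ B : Finset (Fin P.N), (B ∪ r.2.F).card ≤ P.f →
      ∃ π : List (Node P), IsPath P Q r π (P.s, 0) (P.d, m) ∧
        BNullFree P Q r (↑B) π := by
    intro B hB
    have hreach : Reach P Q r B (P.d, m) := by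
      by_contra hnr
      have hst := states_eq P Q r B hB m P.d hnr
      have := h (false, fpatAux P Q r B hB) hst
      simp at this
    obtain ⟨π, h1, h2, h3⟩ := reach_path hreach
    exact ⟨π, ⟨h1, h2, h3.imp fun a b hab => hab.imp id (Or.imp id And.left)⟩, h3⟩
  refine ⟨⟨{π | IsPath P Q r π (P.s, 0) (P.d, m)}, fun π hπ => hπ, fun B hB => ?_⟩, main⟩
  obtain ⟨π, h1, h2⟩ := main B hB
  exact ⟨π, h1, h2⟩


end NullMessages
end

section
/- Resilient blocks imply silent choirs: Let f ≥ 0, let Q be a deterministic protocol, let r ∈ R(Q,γ^f), and let θ and θ' = ⟨q,m⟩ (with m ≥ 1) be process-time nodes. If there is an (f/failed)-resilient message block from θ to θ' in CG_Q(r), then there is an actual message chain from θ to θ' in r, or there exists a silent choir from θ to θ' in r. -/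
namespace NullMessages

lemma actual_refl (P : Params) {Msg : Type} (Q : Protocol P Msg) (r : Run P)
    (θ : Node P) : ActualChain P Q r θ θ :=
  ⟨[θ], by simp [IsActualPath, List.Chain']⟩

lemma actual_snoc (P : Params) {Msg : Type} (Q : Protocol P Msg) (r : Run P)
    {θ u v : Node P} (h : ActualChain P Q r θ u)
    (he : El P u v ∨ Ea P Q r u v) : ActualChain P Q r θ v := by
  obtain ⟨π, h1, h2, h3⟩ := h
  refine ⟨π ++ [v], ?_, ?_, ?_⟩
  · cases π with
    | nil => simp at h1
    | cons a l => simpa using h1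
  · simp [List.getLast?_concat]
  · rw [List.Chain', List.isChain_append]
    refine ⟨h3, by simp, ?_⟩
    intro x hx y hy
    simp at hy
    rw [h2] at hx
    cases hx
    exact hy ▸ he

lemma actual_wait (P : Params) {Msg : Type} (Q : Protocol P Msg) (r : Run P)
    {θ : Node P} {p : Fin P.N} {t t' : ℕ} (h : ActualChain P Q r θ (p, t))
    (htt : t ≤ t') : ActualChain P Q r θ (p, t') := by
  induction t' , htt using Nat.le_induction with
  | base => exact h
  | succ n hn ih => exact actual_snoc P Q r ih (Or.inl ⟨rfl, rfl⟩)

/-- **Resilient blocks imply silent choirs.**  If there is an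
(f/failed)-resilient message block from `θ` to `θ' = ⟨q,m⟩` (with `m ≥ 1`) in
`CG_Q(r)`, then there is an actual message chain from `θ` to `θ'` in `r`, or
a silent choir from `θ` to `θ'` in `r`: a set `C` of processes with
`|C ∪ 𝔽^r| ≥ f+1` each of whose members has an actual message chain from `θ`
to it at time `m-1` and sends no actual message to `q` at time `m-1`. -/
theorem block_implies_silent_choir (P : Params) {Msg : Type} (Q : Protocol P Msg)
    (r : Run P) (θ : Node P) (q : Fin P.N) (m : ℕ) (hm : 1 ≤ m)
    (Γ : Set (List (Node P))) (hΓ : ResBlockFFailed P Q r θ (q, m) Γ) :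
    ActualChain P Q r θ (q, m) ∨
    ∃ C : Finset (Fin P.N), P.f + 1 ≤ (C ∪ r.2.F).card ∧
      ∀ p ∈ C, ActualChain P Q r θ (p, m - 1) ∧
        ¬ SendsActual P Q r p q (m - 1) := by
  classical
  by_cases hac : ActualChain P Q r θ (q, m)
  · exact Or.inl hac
  right
  set C : Finset (Fin P.N) := Finset.univ.filter
    (fun p => ActualChain P Q r θ (p, m - 1) ∧ ¬ SendsActual P Q r p q (m - 1)) with hC
  refine ⟨C, ?_, ?_⟩
  · by_contra hcard
    push_neg at hcard
    obtain ⟨π, hπΓ, hfree⟩ := hΓ.2 C (Nat.lt_succ_iff.mp hcard)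
    obtain ⟨hhead, hlast, _⟩ := hΓ.1 π hπΓ
    -- every edge of a B-null-free path increments the time by 1
    have hinc : ∀ u v : Node P,
        (El P u v ∨ Ea P Q r u v ∨ (En P Q r u v ∧ u.1 ∉ (↑C : Set (Fin P.N)))) →
        v.2 = u.2 + 1 := by
      rintro u v (h | h | h)
      · exact h.2
      · exact h.2
      · exact h.1.2
    -- all node times on the path are at most the last node's time
    have times : ∀ (l : List (Node P)), (l.Chain' fun a b =>
        El P a b ∨ Ea P Q r a b ∨ (En P Q r a b ∧ a.1 ∉ (↑C : Set (Fin P.N)))) →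
        ∀ w, l.getLast? = some w → ∀ x ∈ l, x.2 ≤ w.2 := by
      intro l
      induction l with
      | nil => simp
      | cons a l ih =>
        intro hch w hw x hx
        cases l with
        | nil =>
          simp at hw hx
          simp [hw ▸ hx]
        | cons b l' =>
          rw [List.Chain', List.isChain_cons_cons] at hch
          rw [List.getLast?_cons_cons] at hw
          have hb : b.2 ≤ w.2 := ih hch.2 w hw b (by simp)
          rcases List.mem_cons.mp hx with h | h
          · subst h
            have := hinc x b hch.1
            omega
          · exact ih hch.2 w hw x h
    have htimes := times π hfree (q, m) hlast
    -- walk along the path: each node is reachable by an actual chain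
    have main : ∀ (l : List (Node P)) (u : Node P), (l.Chain' fun a b =>
        El P a b ∨ Ea P Q r a b ∨ (En P Q r a b ∧ a.1 ∉ (↑C : Set (Fin P.N)))) →
        l.head? = some u → (∀ x ∈ l, x.2 ≤ m) → ActualChain P Q r θ u →
        ∀ w, l.getLast? = some w → ActualChain P Q r θ w := by
      intro l
      induction l with
      | nil => simp
      | cons a l ih =>
        intro u hch hhead hle hau w hw
        have hua : a = u := by simpa using hhead
        subst hua
        cases l with
        | nil =>
          simp at hw
          exact hw ▸ hau
        | cons b l' =>
          rw [List.Chain', List.isChain_cons_cons] at hch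
          rw [List.getLast?_cons_cons] at hw
          have hb2 : b.2 ≤ m := hle b (by simp)
          rcases hch.1 with he | he | he
          · exact ih b hch.2 rfl (fun x hx => hle x (by simp [hx]))
              (actual_snoc P Q r hau (Or.inl he)) w hw
          · exact ih b hch.2 rfl (fun x hx => hle x (by simp [hx]))
              (actual_snoc P Q r hau (Or.inr he)) w hw
          · -- null edge with sender not in C : contradiction
            exfalso
            have ha2 : a.2 ≤ m - 1 := by
              have := hinc a b (Or.inr (Or.inr he))
              omega
            have hchain : ActualChain P Q r θ (a.1, m - 1) := by
              have : ActualChain P Q r θ (a.1, a.2) := by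
                simpa using hau
              exact actual_wait P Q r this ha2
            have hsend : SendsActual P Q r a.1 q (m - 1) := by
              by_contra hns
              exact he.2 (by simp [hC, hchain, hns])
            exact hac (actual_snoc P Q r hchain
              (Or.inr ⟨hsend, by simp; omega⟩))
    exact hac (main π (θ) hfree hhead htimes (actual_refl P Q r θ) (q, m) hlast)
  · intro p hp
    rw [hC, Finset.mem_filter] at hp
    exact hp.2

end NullMessages
end

section
/- Nice-run Information Transfer, sufficiency: Let f ≥ 0 and let Q be a Nice-based Message (NbM) protocol whose nice communication graph nG(Q) contains an f-resilient message block from ⟨s,0⟩ to ⟨d,m⟩. Then K_d(v_s = 1) holds at (r̂,m), where r̂ is Q's nice run. -/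
namespace NullMessages

section AuxNiceIT

variable (P : Params) {Msg : Type} (Q : Protocol P Msg)

lemma stateAt_succ_eq (r : Run P) (t : ℕ) (p : Fin P.N) :
    stateAt P Q r (t + 1) p =
      match r.2.fp p with
      | some x => if x.1 ≤ t then stateAt P Q r t p
          else stepState P Q r (stateAt P Q r t) t p
      | none => stepState P Q r (stateAt P Q r t) t p := rfl

lemma nice_fp_none (p : Fin P.N) : (niceRun P).2.fp p = none := rfl

lemma nice_stateAt_succ (t : ℕ) (p : Fin P.N) :
    stateAt P Q (niceRun P) (t + 1) p =
      stepState P Q (niceRun P) (stateAt P Q (niceRun P) t) t p := rfl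

lemma len_le (r : Run P) : ∀ (t : ℕ) (p : Fin P.N),
    (stateAt P Q r t p).2.length ≤ t := by
  intro t
  induction t with
  | zero => intro p; simp [stateAt]
  | succ t ih =>
    intro p
    rw [stateAt_succ_eq]
    rcases h : r.2.fp p with _ | x
    · simpa [stepState] using ih p
    · dsimp only
      split
      · exact le_trans (ih p) (Nat.le_succ t)
      · simpa [stepState] using ih p

lemma nice_len : ∀ (t : ℕ) (p : Fin P.N),
    (stateAt P Q (niceRun P) t p).2.length = t := by
  intro t
  induction t with
  | zero => intro p; simp [stateAt]
  | succ t ih =>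
    intro p
    rw [nice_stateAt_succ]
    simp [stepState, ih p]

lemma stepState_inj {r r' : Run P} {σ σ' : Fin P.N → LState P Msg} {t : ℕ}
    {p : Fin P.N} (h : stepState P Q r σ t p = stepState P Q r' σ' t p) :
    σ p = σ' p ∧ ∀ q, sendRound P Q r σ t q p = sendRound P Q r' σ' t q p := by
  simp only [stepState, Prod.mk.injEq] at h
  obtain ⟨h1, h2⟩ := h
  have hlen : (σ p).2.length = (σ' p).2.length := by
    have := congrArg List.length h2; simpa using this
  obtain ⟨h3, h4⟩ := List.append_inj h2 hlen
  simp only [List.cons.injEq, and_true, Event.mk.injEq] at h4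
  exact ⟨Prod.ext h1 h3, fun q => congrFun h4.2 q⟩

/-- Local propagation of state difference from the nice run. -/
lemma state_ne_succ_local (r : Run P) (t : ℕ) (p : Fin P.N)
    (h : stateAt P Q r t p ≠ stateAt P Q (niceRun P) t p) :
    stateAt P Q r (t + 1) p ≠ stateAt P Q (niceRun P) (t + 1) p := by
  intro heq
  rw [nice_stateAt_succ, stateAt_succ_eq] at heq
  rcases hf : r.2.fp p with _ | x
  · rw [hf] at heq
    exact h (stepState_inj P Q heq).1
  · rw [hf] at heq
    dsimp only at heq
    by_cases hx : x.1 ≤ t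
    · rw [if_pos hx] at heq
      have h1 := len_le P Q r t p
      have h2 := congrArg (fun s : LState P Msg => s.2.length) heq
      simp [stepState, nice_len P Q t p] at h2
      omega
    · rw [if_neg hx] at heq
      exact h (stepState_inj P Q heq).1

/-- If a process receives different messages from `q` in `r` and the nice run,
its next state differs from its nice-run state. -/
lemma state_ne_succ_rcvd (r : Run P) (t : ℕ) (q p : Fin P.N)
    (h : msgSent P Q r q p t ≠ msgSent P Q (niceRun P) q p t) :
    stateAt P Q r (t + 1) p ≠ stateAt P Q (niceRun P) (t + 1) p := by
  intro heq
  rw [nice_stateAt_succ, stateAt_succ_eq] at heq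
  rcases hf : r.2.fp p with _ | x
  · rw [hf] at heq
    exact h ((stepState_inj P Q heq).2 q)
  · rw [hf] at heq
    dsimp only at heq
    by_cases hx : x.1 ≤ t
    · rw [if_pos hx] at heq
      have h1 := len_le P Q r t p
      have h2 := congrArg (fun s : LState P Msg => s.2.length) heq
      simp [stepState, nice_len P Q t p] at h2
      omega
    · rw [if_neg hx] at heq
      exact h ((stepState_inj P Q heq).2 q)

/-- Knowing `¬ψ_nice` is the same as having a local state different from the
nice-run state. -/
lemma kn_nice_iff (i : Fin P.N) (r : Run P) (t : ℕ) :
    Kn P Q i (fun r'' _ => r'' ≠ niceRun P) r t ↔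
      stateAt P Q r t i ≠ stateAt P Q (niceRun P) t i := by
  constructor
  · intro hK heq
    exact hK (niceRun P) heq.symm rfl
  · intro hne r'' hst hr''
    subst hr''
    exact hne hst.symm

lemma chain_transfer {α : Type*} {R : α → α → Prop} {I : α → Prop}
    (hR : ∀ u v, R u v → I u → I v) :
    ∀ (π : List α) (θ θ' : α), π.head? = some θ → π.getLast? = some θ' →
      π.Chain' R → I θ → I θ' := by
  intro π
  induction π with
  | nil => intro θ θ' h; simp at h
  | cons x xs ih =>
    intro θ θ' hh hl hc hI
    simp only [List.head?_cons, Option.some.injEq] at hh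
    subst hh
    cases xs with
    | nil =>
      simp only [List.getLast?_singleton, Option.some.injEq] at hl
      subst hl; exact hI
    | cons y ys =>
      rw [show List.Chain' R (x :: y :: ys) ↔ _ from List.isChain_cons_cons] at hc
      exact ih y θ' rfl (by simpa using hl) hc.2 (hR _ _ hc.1 hI)

end AuxNiceIT

/-- **Nice-run Information Transfer, sufficiency.**  If `Q` is a Nice-based
Message protocol whose nice communication graph contains an f-resilient
message block from `⟨s,0⟩` to `⟨d,m⟩`, then `K_d(v_s = 1)` holds at time `m`
in `Q`'s nice run. -/
theorem nice_IT_sufficient (P : Params) (Q : Protocol P Bool) (hQ : NbM P Q)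
    (m : ℕ)
    (hblock : ∃ Γ : Set (List (Node P)),
      ResBlockN P Q (niceRun P) P.f (P.s, 0) (P.d, m) Γ) :
    Kn P Q P.d (fun r' _ => r'.1 = true) (niceRun P) m := by
  intro r' hst
  by_contra hT
  have hfalse : r'.1 = false := by
    cases h : r'.1
    · rfl
    · exact absurd h hT
  obtain ⟨Γ, hpaths, hres⟩ := hblock
  obtain ⟨π, hπΓ, hfree⟩ := hres r'.2.F r'.2.card_le
  obtain ⟨hhead, hlast, -⟩ := hpaths π hπΓ
  have key : ∀ u v : Node P,
      (El P u v ∨ Ea P Q (niceRun P) u v ∨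
        (En P Q (niceRun P) u v ∧ u.1 ∉ (↑r'.2.F : Set (Fin P.N)))) →
      stateAt P Q r' u.2 u.1 ≠ stateAt P Q (niceRun P) u.2 u.1 →
      stateAt P Q r' v.2 v.1 ≠ stateAt P Q (niceRun P) v.2 v.1 := by
    rintro ⟨p, t⟩ ⟨j, t'⟩ hedge hne
    simp only [El, Ea, En] at hedge
    dsimp only at hedge hne ⊢
    rcases hedge with ⟨h1, h2⟩ | ⟨hact, h2⟩ | ⟨⟨hnull, h2⟩, hpB⟩
    · subst h1; subst h2
      exact state_ne_succ_local P Q r' t j hne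
    · subst h2
      apply state_ne_succ_rcvd P Q r' t p j
      obtain ⟨b, hb⟩ := Option.isSome_iff_exists.mp hact
      have hbtrue : b = true := by
        have hiff := hQ.1 (niceRun P) p j t b hb
        cases b
        · exact absurd (hiff.mp rfl (niceRun P) rfl) (by simp)
        · rfl
      subst hbtrue
      rw [hb]
      intro hmsg
      have hiff := hQ.1 r' p j t true hmsg
      have hnK : ¬ Kn P Q p (fun r'' _ => r'' ≠ niceRun P) r' t :=
        fun hK => absurd (hiff.mpr hK) (by simp)
      exact hnK ((kn_nice_iff P Q p r' t).mpr hne)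
    · subst h2
      have hfpnone : r'.2.fp p = none := by
        have hns : ¬ (r'.2.fp p).isSome := by
          simpa [FPat.F] using hpB
        exact Option.not_isSome_iff_eq_none.mp hns
      have hnbl : ¬ BlockedAt P r' p j t := by
        rintro ⟨x, hx, -⟩
        rw [hfpnone] at hx
        simp at hx
      have hcase := hQ.2 p j t ⟨niceRun P, hnull⟩ r' hnbl
      have hK := (kn_nice_iff P Q p r' t).mpr hne
      have hnsn : ¬ SendsNull P Q r' p j t := fun hs => (hcase.mp hs) hK
      have hact' : SendsActual P Q r' p j t := by
        by_contra hna
        exact hnsn ⟨hnbl, hna, hnull.2.2⟩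
      apply state_ne_succ_rcvd P Q r' t p j
      have hnone : msgSent P Q (niceRun P) p j t = none :=
        Option.not_isSome_iff_eq_none.mp hnull.2.1
      rw [hnone]
      exact Option.isSome_iff_ne_none.mp hact'
  have hbase : stateAt P Q r' 0 P.s ≠ stateAt P Q (niceRun P) 0 P.s := by
    simp [stateAt, initVal, niceRun, hfalse]
  have hfinal :=
    chain_transfer
      (I := fun θ : Node P =>
        stateAt P Q r' θ.2 θ.1 ≠ stateAt P Q (niceRun P) θ.2 θ.1)
      key π (P.s, 0) (P.d, m) hhead hlast hfree hbase
  exact hfinal hst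

end NullMessages
end

section
/- Uniqueness of the minimal failure pattern: For every run r of a deterministic protocol Q in the model γ^f, there is exactly one failure pattern that is compatible with r and minimal with respect to r. -/
namespace NullMessages

/-!
Compatibility with `r` fixes which processes fail and when; the only freedom is in the
blocked sets, which must contain every channel on which the message prescribed by `Q` in the
crash round was not delivered and are unconstrained elsewhere. Blocking exactly those channels
gives a compatible pattern than which every compatible pattern is harsher, and harshness is
antisymmetric, so this pattern is the one and only minimal one.
-/

theorem FPat.ext {P : Params} {A B : FPat P} (h : A.fp = B.fp) : A = B := by
  cases A; cases B; simp_all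

theorem Harsher.antisymm {P : Params} {A B : FPat P} (hAB : Harsher P A B)
    (hBA : Harsher P B A) : A = B := by
  refine FPat.ext (funext fun q => ?_)
  cases hA : A.fp q with
  | none =>
      cases hB : B.fp q with
      | none => rfl
      | some y => simpa [hA, hB] using hAB.1 q
  | some x =>
      obtain ⟨y, hB⟩ := Option.isSome_iff_exists.1 (hBA.1 q (by simp [hA]))
      have hxy := hAB.2 q y hB x hA
      have hyx := hBA.2 q x hA y hB
      rw [hB, Prod.ext_iff.2 ⟨by omega, (hxy.resolve_left (by omega)).2.antisymm
        (hyx.resolve_left (by omega)).2⟩]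

def minBlocked (P : Params) {Msg : Type} (Q : Protocol P Msg) (r : Run P)
    (q : Fin P.N) (t : ℕ) : Finset (Fin P.N) :=
  Finset.univ.filter fun p =>
    P.chan q p = true ∧ (Q.send (stateAt P Q r t q) p).isSome ∧
      ¬ (msgSent P Q r q p t).isSome

def minPattern (P : Params) {Msg : Type} (Q : Protocol P Msg) (r : Run P) : FPat P where
  fp q := (r.2.fp q).map fun y => (y.1, minBlocked P Q r q y.1)
  card_le := by
    refine le_trans (le_of_eq ?_) r.2.card_le
    congr 1; ext q; cases r.2.fp q <;> simp

theorem compatible_minPattern (P : Params) {Msg : Type} (Q : Protocol P Msg)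
    (r : Run P) : Compatible P Q r (minPattern P Q r) := by
  refine ⟨fun q => ?_, fun q x hx y hy => ?_, fun q x hx p hp => ?_⟩
  · simp [minPattern]
  · obtain ⟨z, hz, rfl⟩ := Option.map_eq_some_iff.1 hx
    rw [Option.mem_def.1 hy] at hz
    cases hz; rfl
  · obtain ⟨z, -, rfl⟩ := Option.map_eq_some_iff.1 hx
    simp only [minBlocked, Finset.mem_filter, Finset.mem_univ, true_and]
    tauto

theorem Compatible.harsher_minPattern {P : Params} {Msg : Type} {Q : Protocol P Msg}
    {r : Run P} {FP : FPat P} (hc : Compatible P Q r FP) :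
    Harsher P FP (minPattern P Q r) := by
  refine ⟨fun q h => ?_, fun q x hx x' hx' => Or.inr ?_⟩
  · simpa [hc.1 q, minPattern] using h
  · obtain ⟨y, hy, rfl⟩ := Option.map_eq_some_iff.1 hx
    have ht : x'.1 = y.1 := hc.2.1 q x' hx' y hy
    refine ⟨ht, fun p hp => ?_⟩
    simp only [minBlocked, Finset.mem_filter, Finset.mem_univ, true_and] at hp
    have hsent := hc.2.2 q x' hx' p (ht ▸ ⟨hp.1, hp.2.1⟩)
    rw [ht] at hsent
    by_contra hp'
    exact hp.2.2 (hsent.2 hp')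

theorem minimalFP_minPattern (P : Params) {Msg : Type} (Q : Protocol P Msg) (r : Run P) :
    MinimalFP P Q r (minPattern P Q r) :=
  ⟨compatible_minPattern P Q r, fun _ hc hh => hc.harsher_minPattern.antisymm hh⟩

/-- **Uniqueness of the minimal failure pattern.**  For every run `r` of a
deterministic protocol `Q` in `γ^f`, there is exactly one failure pattern that
is compatible with `r` and minimal with respect to `r`. -/
theorem minimal_failure_pattern_unique (P : Params) {Msg : Type}
    (Q : Protocol P Msg) (r : Run P) :
    ∃! FP : FPat P, MinimalFP P Q r FP :=
  ⟨minPattern P Q r, minimalFP_minPattern P Q r, fun _ hFP =>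
    (hFP.2 _ (compatible_minPattern P Q r) hFP.1.harsher_minPattern).symm⟩

end NullMessages
end
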